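/- arXiv:2210.03947 — 4 statements merged into one kernel-verified Lean document; each statement's English description precedes it below -/
import Mathlib

section
/- Let f : ℝ^n → ℝ be differentiable and μ-strongly convex with μ > 0. Then its Legendre–Fenchel conjugate f* is differentiable and (1/μ)-smooth, i.e., ‖∇f*(y) − ∇f*(z)‖ ≤ (1/μ)‖y − z‖ for all y, z. -/
/-! Strong convexity makes `g = ∇f` strongly monotone, and it makes every tilt `f - ⟪y, ·⟫`
coercive, so the tilt attains its minimum at a critical point: `g` is onto. Strong monotonicity
then makes any right inverse `σ` of `g` a `1/μ`-Lipschitz map. Since `σ y` maximises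
`⟪y, ·⟫ - f`, we get `f* y = ⟪y, σ y⟫ - f (σ y)`, and comparing the maximisers at `y` and `z`
squeezes `f* z - f* y - ⟪σ y, z - y⟫` between `0` and `⟪z - y, σ z - σ y⟫ = o(‖z - y‖)`,
so `∇f* = σ`. -/

open scoped RealInnerProductSpace

/-- The Legendre–Fenchel conjugate of `f`. -/
noncomputable def fenchelConj {n : ℕ} (f : EuclideanSpace ℝ (Fin n) → ℝ)
    (y : EuclideanSpace ℝ (Fin n)) : ℝ :=
  ⨆ x : EuclideanSpace ℝ (Fin n), (⟪y, x⟫ - f x)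

open InnerProductSpace Filter Topology

section

variable {E : Type*} [NormedAddCommGroup E] [InnerProductSpace ℝ E]

def StronglyConvexWithSubgradient (μ : ℝ) (f : E → ℝ) (g : E → E) : Prop :=
  ∀ x y, μ / 2 * ‖y - x‖ ^ 2 ≤ f y - f x - ⟪g x, y - x⟫

namespace StronglyConvexWithSubgradient

variable {μ : ℝ} {f : E → ℝ} {g : E → E}

theorem mul_norm_sub_sq_le_inner (h : StronglyConvexWithSubgradient μ f g) (x z : E) :
    μ * ‖x - z‖ ^ 2 ≤ ⟪g x - g z, x - z⟫ := by
  have hxz := h x z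
  have hzx := h z x
  rw [norm_sub_rev] at hxz
  rw [← neg_sub x z, inner_neg_right] at hxz
  rw [inner_sub_left]
  linarith

theorem norm_sub_le_of_rightInverse (h : StronglyConvexWithSubgradient μ f g) (hμ : 0 < μ)
    {σ : E → E} (hσ : Function.RightInverse σ g) (y z : E) :
    ‖σ y - σ z‖ ≤ 1 / μ * ‖y - z‖ := by
  have hmono := h.mul_norm_sub_sq_le_inner (σ y) (σ z)
  rw [hσ y, hσ z] at hmono
  have hcs : ⟪y - z, σ y - σ z⟫ ≤ ‖y - z‖ * ‖σ y - σ z‖ := real_inner_le_norm _ _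
  rcases (norm_nonneg (σ y - σ z)).eq_or_lt with hzero | hpos
  · rw [← hzero]; positivity
  have hmul : μ * ‖σ y - σ z‖ * ‖σ y - σ z‖ ≤ ‖y - z‖ * ‖σ y - σ z‖ := by nlinarith
  rw [one_div_mul_eq_div, le_div_iff₀ hμ, mul_comm]
  exact le_of_mul_le_mul_right hmul hpos

theorem inner_sub_le_inner_sub (h : StronglyConvexWithSubgradient μ f g) (hμ : 0 ≤ μ)
    (x z : E) : ⟪g x, z⟫ - f z ≤ ⟪g x, x⟫ - f x := by
  have hxz := h x z
  rw [inner_sub_right] at hxz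
  nlinarith [norm_nonneg (z - x)]

theorem sub_inner (h : StronglyConvexWithSubgradient μ f g) (y : E) :
    StronglyConvexWithSubgradient μ (fun x => f x - ⟪y, x⟫) (fun x => g x - y) := by
  intro x z
  have hxz := h x z
  rw [inner_sub_left, inner_sub_right y] at *
  linarith

theorem tendsto_cocompact_atTop [ProperSpace E] (h : StronglyConvexWithSubgradient μ f g)
    (hμ : 0 < μ) : Tendsto f (cocompact E) atTop := by
  have hquad : Tendsto (fun t : ℝ => f 0 + t * (μ / 2 * t - ‖g 0‖)) atTop atTop :=
    tendsto_atTop_add_const_left _ _ <| tendsto_id.atTop_mul_atTop₀ <|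
      tendsto_atTop_add_const_right _ _ <| tendsto_id.const_mul_atTop (half_pos hμ)
  refine tendsto_atTop_mono (fun x => ?_) (hquad.comp tendsto_norm_cocompact_atTop)
  have h0x := h 0 x
  have hcs : ⟪g 0, x⟫ ≥ -(‖g 0‖ * ‖x‖) := neg_le_of_abs_le (abs_real_inner_le_norm _ _)
  simp only [sub_zero, Function.comp_apply] at *
  nlinarith

theorem exists_eq_zero [ProperSpace E] (h : StronglyConvexWithSubgradient μ f g) (hμ : 0 < μ)
    (hg : ∀ x, HasGradientAt f (g x) x) : ∃ x, g x = 0 := by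
  have hf : Continuous f := continuous_iff_continuousAt.2 fun x => (hg x).continuousAt
  obtain ⟨x₀, hx₀⟩ := hf.exists_forall_le (h.tendsto_cocompact_atTop hμ)
  have hcrit := IsLocalMin.hasFDerivAt_eq_zero (Eventually.of_forall hx₀) (hg x₀)
  exact ⟨x₀, (toDual ℝ E).map_eq_zero_iff.1 hcrit⟩

theorem surjective [ProperSpace E] (h : StronglyConvexWithSubgradient μ f g) (hμ : 0 < μ)
    (hg : ∀ x, HasGradientAt f (g x) x) : Function.Surjective g := by
  intro y
  have hgy : ∀ x, HasGradientAt (fun x => f x - ⟪y, x⟫) (g x - y) x := fun x => by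
    show HasFDerivAt _ (toDual ℝ E (g x - y)) x
    rw [map_sub]
    exact (hg x).hasFDerivAt.sub (toDual ℝ E y).hasFDerivAt
  obtain ⟨x, hx⟩ := (h.sub_inner y).exists_eq_zero hμ hgy
  exact ⟨x, sub_eq_zero.1 hx⟩

end StronglyConvexWithSubgradient

theorem hasGradientAt_inner_sub_of_forall_le [CompleteSpace E] {f : E → ℝ} {σ : E → E}
    (hmax : ∀ y x, ⟪y, x⟫ - f x ≤ ⟪y, σ y⟫ - f (σ y)) {y : E} (hσ : ContinuousAt σ y) :
    HasGradientAt (fun z => ⟪z, σ z⟫ - f (σ z)) (σ y) y := by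
  rw [hasGradientAt_iff_isLittleO, Asymptotics.isLittleO_iff]
  intro c hc
  filter_upwards [hσ (Metric.closedBall_mem_nhds (σ y) hc)] with z hz
  rw [Set.mem_preimage, Metric.mem_closedBall, dist_eq_norm] at hz
  have hlow := hmax z (σ y)
  have hup := hmax y (σ z)
  have hexpand : ⟪z - y, σ z - σ y⟫ = ⟪z, σ z⟫ - ⟪y, σ z⟫ - (⟪z, σ y⟫ - ⟪y, σ y⟫) := by
    rw [inner_sub_left, inner_sub_right, inner_sub_right]; ring
  have hexpand' : ⟪σ y, z - y⟫ = ⟪z, σ y⟫ - ⟪y, σ y⟫ := by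
    rw [real_inner_comm, inner_sub_left]
  calc ‖⟪z, σ z⟫ - f (σ z) - (⟪y, σ y⟫ - f (σ y)) - ⟪σ y, z - y⟫‖
      ≤ ⟪z - y, σ z - σ y⟫ := by
        rw [Real.norm_eq_abs, abs_le]; constructor <;> linarith
    _ ≤ ‖z - y‖ * ‖σ z - σ y‖ := real_inner_le_norm _ _
    _ ≤ c * ‖z - y‖ := by rw [mul_comm]; gcongr

end

theorem fenchelConj_eq_of_forall_le {n : ℕ} {f : EuclideanSpace ℝ (Fin n) → ℝ}
    {y x₀ : EuclideanSpace ℝ (Fin n)} (hx₀ : ∀ x, ⟪y, x⟫ - f x ≤ ⟪y, x₀⟫ - f x₀) :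
    fenchelConj f y = ⟪y, x₀⟫ - f x₀ :=
  le_antisymm (ciSup_le hx₀) (le_ciSup ⟨_, Set.forall_mem_range.2 hx₀⟩ x₀)

theorem conjugate_of_strongly_convex_is_smooth {n : ℕ}
    (f : EuclideanSpace ℝ (Fin n) → ℝ)
    (g : EuclideanSpace ℝ (Fin n) → EuclideanSpace ℝ (Fin n))
    (μ : ℝ) (hμ : 0 < μ)
    (hg : ∀ x, HasGradientAt f (g x) x)
    (hsc : ∀ x y, μ / 2 * ‖y - x‖ ^ 2 ≤ f y - f x - ⟪g x, y - x⟫) :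
    ∃ gs : EuclideanSpace ℝ (Fin n) → EuclideanSpace ℝ (Fin n),
      (∀ y, HasGradientAt (fenchelConj f) (gs y) y) ∧
      (∀ y z, ‖gs y - gs z‖ ≤ (1 / μ) * ‖y - z‖) := by
  have h : StronglyConvexWithSubgradient μ f g := hsc
  obtain ⟨σ, hσ⟩ := (h.surjective hμ hg).hasRightInverse
  have hLip := h.norm_sub_le_of_rightInverse hμ hσ
  have hσmax : ∀ y x, ⟪y, x⟫ - f x ≤ ⟪y, σ y⟫ - f (σ y) := fun y x => by
    simpa only [hσ y] using h.inner_sub_le_inner_sub hμ.le (σ y) x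
  have hconj : fenchelConj f = fun y => ⟪y, σ y⟫ - f (σ y) :=
    funext fun y => fenchelConj_eq_of_forall_le (hσmax y)
  have hσcont : Continuous σ :=
    (LipschitzWith.of_dist_le' fun y z => by simpa only [dist_eq_norm] using hLip y z).continuous
  refine ⟨σ, fun y => ?_, hLip⟩
  rw [hconj]
  exact hasGradientAt_inner_sub_of_forall_le hσmax hσcont.continuousAt
end

section
/- Let f : ℝ^n → ℝ be differentiable and μ-strongly convex. Then the gradient map ∇f : ℝ^n → ℝ^n is a bijection, i.e., for every y ∈ ℝ^n there is a unique x with ∇f(x) = y. -/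
open scoped RealInnerProductSpace

theorem gradient_bijective_of_strongly_convex {n : ℕ}
    (f : EuclideanSpace ℝ (Fin n) → ℝ)
    (g : EuclideanSpace ℝ (Fin n) → EuclideanSpace ℝ (Fin n))
    (μ : ℝ) (hμ : 0 < μ)
    (hg : ∀ x, HasGradientAt f (g x) x)
    (hsc : ∀ x y, μ / 2 * ‖y - x‖ ^ 2 ≤ f y - f x - ⟪g x, y - x⟫) :
    Function.Bijective g := by
  have key : ∀ x y, μ * ‖y - x‖ ^ 2 ≤ ⟪g y - g x, y - x⟫ := by
    intro x y
    have h1 := hsc x y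
    have h2 := hsc y x
    rw [inner_sub_left]
    have hxy : (x - y : EuclideanSpace ℝ (Fin n)) = -(y - x) := by abel
    rw [hxy, inner_neg_right, norm_neg] at h2
    linarith
  constructor
  · intro a b hab
    have := key a b
    rw [hab, sub_self, inner_zero_left] at this
    have hnorm : ‖b - a‖ ^ 2 ≤ 0 := by nlinarith
    have : b - a = 0 := by
      have := sq_nonneg ‖b - a‖
      have h0 : ‖b - a‖ ^ 2 = 0 := le_antisymm hnorm this
      simpa [pow_eq_zero_iff] using norm_eq_zero.mp (by nlinarith [norm_nonneg (b - a)])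
    exact (sub_eq_zero.mp this).symm
  · intro y
    set h : EuclideanSpace ℝ (Fin n) → ℝ := fun x => f x - ⟪y, x⟫ with hh
    have hgrad : ∀ x, HasGradientAt h (g x - y) x := by
      intro x
      have h1 : HasFDerivAt f (InnerProductSpace.toDual ℝ _ (g x)) x := (hg x).hasFDerivAt
      have h2 : HasFDerivAt (fun z => ⟪y, z⟫) (InnerProductSpace.toDual ℝ _ y : _ →L[ℝ] ℝ) x := by
        have : HasFDerivAt (fun z : EuclideanSpace ℝ (Fin n) => ⟪y, z⟫)
            (innerSL ℝ y) x := (innerSL ℝ y).hasFDerivAt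
        convert this using 2
        ext z
        simp only [InnerProductSpace.toDual_apply_apply, innerSL_apply_apply]
      have := h1.sub h2
      rw [hasGradientAt_iff_hasFDerivAt, map_sub]
      exact this
    have hcont : Continuous h := by
      have hf : Continuous f := by
        rw [continuous_iff_continuousAt]
        exact fun x => (hg x).hasFDerivAt.differentiableAt.continuousAt
      exact hf.sub (continuous_const.inner continuous_id)
    set c := ‖g 0 - y‖ with hc
    have hlow : ∀ x, f 0 - c * ‖x‖ + μ / 2 * ‖x‖ ^ 2 ≤ h x := by
      intro x
      have h1 := hsc 0 x
      simp only [sub_zero] at h1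
      have h3 : -(c * ‖x‖) ≤ ⟪g 0 - y, x⟫ := by
        have := abs_real_inner_le_norm (g 0 - y) x
        rw [abs_le] at this
        exact this.1.trans_eq' rfl
      rw [inner_sub_left] at h3
      simp only [hh]
      linarith
    have hcoer : Filter.Tendsto h (Filter.cocompact _) Filter.atTop := by
      have hφ : Filter.Tendsto (fun t : ℝ => f 0 - c * t + μ / 2 * t ^ 2)
          Filter.atTop Filter.atTop := by
        have : ∀ t : ℝ, f 0 - c * t + μ / 2 * t ^ 2 = (μ / 2 * t - c) * t + f 0 := by
          intro t; ring
        simp only [this]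
        apply Filter.tendsto_atTop_add_const_right
        exact Filter.Tendsto.atTop_mul_atTop₀
          (Filter.tendsto_atTop_add_const_right _ _
            (Filter.Tendsto.const_mul_atTop (by linarith) Filter.tendsto_id))
          Filter.tendsto_id
      have := hφ.comp (tendsto_norm_cocompact_atTop
        (E := EuclideanSpace ℝ (Fin n)))
      exact Filter.tendsto_atTop_mono (fun x => hlow x) this
    obtain ⟨x₀, hx₀⟩ := hcont.exists_forall_le hcoer
    refine ⟨x₀, ?_⟩
    have hmin : IsLocalMin h x₀ := Filter.Eventually.of_forall hx₀
    have := hmin.hasFDerivAt_eq_zero (hgrad x₀).hasFDerivAt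
    have h0 : InnerProductSpace.toDual ℝ _ (g x₀ - y) = 0 := this
    have : g x₀ - y = 0 := by
      have := congrArg (fun φ => (InnerProductSpace.toDual ℝ
        (EuclideanSpace ℝ (Fin n))).symm φ) h0
      simpa using this
    exact sub_eq_zero.mp this
end

section
/- Let B be a real N×m matrix and ζ ∈ {−1, 0, 1}^m with ζ = sign(Bᵀx) for some x ∈ ℝ^N with Bᵀx ≠ 0 (componentwise sign). Let η be the orthogonal projection of ζ onto the null space of B. Then ‖ζ − η‖ ≥ 1, and consequently ζᵀBᵀBζ ≥ λ₂(BᵀB), where λ₂(BᵀB) is the smallest positive eigenvalue of BᵀB. -/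
open Matrix

private lemma sign_mul_self_eq_abs (t : ℝ) : Real.sign t * t = |t| := by
  rcases lt_trichotomy t 0 with h | h | h
  · rw [Real.sign_of_neg h, abs_of_neg h]; ring
  · simp [h]
  · rw [Real.sign_of_pos h, abs_of_pos h]; ring

theorem sign_vector_projection_bound {N m : ℕ}
    (B : Matrix (Fin N) (Fin m) ℝ) (x : Fin N → ℝ)
    (hx : Bᵀ.mulVec x ≠ 0)
    (ζ : Fin m → ℝ) (hζ : ∀ k, ζ k = Real.sign (Bᵀ.mulVec x k))
    (η : Fin m → ℝ)
    (hηker : B.mulVec η = 0)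
    (hperp : ∀ w, B.mulVec w = 0 → (ζ - η) ⬝ᵥ w = 0)
    (hM : (Bᵀ * B).IsHermitian) (lam2 : ℝ)
    (hlam : IsLeast {r : ℝ | 0 < r ∧ ∃ i, hM.eigenvalues i = r} lam2) :
    1 ≤ Real.sqrt ((ζ - η) ⬝ᵥ (ζ - η)) ∧ lam2 ≤ ζ ⬝ᵥ (Bᵀ * B).mulVec ζ := by
  classical
  set v : Fin m → ℝ := ζ - η with hv
  set xh : Fin m → ℝ := Bᵀ.mulVec x with hxh
  -- η ⊥ range(Bᵀ)
  have hηxh : η ⬝ᵥ xh = 0 := by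
    have : η ⬝ᵥ xh = (B.mulVec η) ⬝ᵥ x := by
      rw [hxh, dotProduct_mulVec, vecMul_transpose]
    rw [this, hηker, zero_dotProduct]
  -- v ⬝ᵥ xh = ∑ |xh k|
  have hS : v ⬝ᵥ xh = ∑ k, |xh k| := by
    rw [hv, sub_dotProduct, hηxh, sub_zero, dotProduct]
    exact Finset.sum_congr rfl fun k _ => by rw [hζ k, sign_mul_self_eq_abs]
  set T : ℝ := ∑ k, xh k ^ 2 with hT
  have hT0 : 0 < T := by
    have : xh ⬝ᵥ xh ≠ 0 := fun h => hx (dotProduct_self_eq_zero.mp h)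
    have h1 : xh ⬝ᵥ xh = T := by simp [dotProduct, hT, sq]
    have h2 : 0 ≤ T := Finset.sum_nonneg fun _ _ => sq_nonneg _
    rcases h2.lt_or_eq with h | h
    · exact h
    · exact absurd (h1.trans h.symm) this
  -- ℓ¹ ≥ ℓ²:  T ≤ (∑ |xh k|)²
  have hl1 : T ≤ (∑ k, |xh k|) ^ 2 := by
    have := Finset.sum_sq_le_sq_sum_of_nonneg
      (f := fun k => |xh k|) (s := Finset.univ) (fun i _ => abs_nonneg _)
    simpa [sq_abs] using this
  -- Cauchy–Schwarz: (v ⬝ᵥ xh)² ≤ (v ⬝ᵥ v) * T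
  have hCS : (v ⬝ᵥ xh) ^ 2 ≤ (v ⬝ᵥ v) * T := by
    have := Finset.sum_mul_sq_le_sq_mul_sq Finset.univ v xh
    simpa [dotProduct, hT, sq, Finset.mul_sum, mul_comm, mul_assoc, mul_left_comm] using this
  have hvv1 : 1 ≤ v ⬝ᵥ v := by
    rw [hS] at hCS
    nlinarith [hCS, hl1, hT0]
  have part1 : 1 ≤ Real.sqrt (v ⬝ᵥ v) := by
    rw [show (1:ℝ) = Real.sqrt 1 by simp]
    exact Real.sqrt_le_sqrt hvv1
  refine ⟨part1, ?_⟩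
  -- spectral part
  set M : Matrix (Fin m) (Fin m) ℝ := Bᵀ * B with hMdef
  have hMη : M.mulVec η = 0 := by
    rw [hMdef, ← mulVec_mulVec, hηker, mulVec_zero]
  have hred : ζ ⬝ᵥ M.mulVec ζ = v ⬝ᵥ M.mulVec v := by
    have hζv : ζ = v + η := by rw [hv]; simp
    have hMζ : M.mulVec ζ = M.mulVec v := by
      rw [hζv, mulVec_add, hMη, add_zero]
    have hηMv : η ⬝ᵥ M.mulVec v = 0 := by
      have : η ⬝ᵥ M.mulVec v = (B.mulVec η) ⬝ᵥ (B.mulVec v) := by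
        rw [hMdef, ← mulVec_mulVec, dotProduct_mulVec, vecMul_transpose]
      rw [this, hηker, zero_dotProduct]
    rw [hMζ, hζv, add_dotProduct, hηMv, add_zero]
  rw [hred]
  -- eigen decomposition
  set U : Matrix (Fin m) (Fin m) ℝ := (hM.eigenvectorUnitary : Matrix (Fin m) (Fin m) ℝ) with hU
  set c : Fin m → ℝ := Uᵀ.mulVec v with hc
  have hstar : star U = Uᵀ := by
    rw [Matrix.star_eq_conjTranspose, conjTranspose_eq_transpose_of_trivial]
  have hUUt : U * Uᵀ = 1 := by
    rw [← hstar]; exact (Matrix.mem_unitaryGroup_iff).mp hM.eigenvectorUnitary.2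
  have hUtU : Uᵀ * U = 1 := by
    rw [← hstar]; exact (Matrix.mem_unitaryGroup_iff').mp hM.eigenvectorUnitary.2
  -- v ⬝ᵥ v = c ⬝ᵥ c
  have hnorm : v ⬝ᵥ v = c ⬝ᵥ c := by
    rw [hc, dotProduct_mulVec, vecMul_transpose, mulVec_mulVec, hUUt, one_mulVec]
  -- v ⬝ᵥ M v = ∑ λ i * c i ^ 2
  have hquad : v ⬝ᵥ M.mulVec v = ∑ i, hM.eigenvalues i * c i ^ 2 := by
    have hspec := hM.spectral_theorem
    rw [Unitary.conjStarAlgAut_apply, hstar] at hspec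
    conv_lhs => rw [hspec]
    rw [← mulVec_mulVec, ← mulVec_mulVec, dotProduct_mulVec, ← mulVec_transpose, ← hc]
    simp only [dotProduct, mulVec_diagonal, Function.comp_apply, RCLike.ofReal_real_eq_id, id_eq]
    exact Finset.sum_congr rfl fun i _ => by ring
  -- zero eigenvalue ⇒ coefficient zero; positive ⇒ ≥ lam2
  have hkey : ∀ i, lam2 * c i ^ 2 ≤ hM.eigenvalues i * c i ^ 2 := by
    intro i
    by_cases hci : c i = 0
    · simp [hci]
    · -- eigenvector u_i
      set u : Fin m → ℝ := ⇑(hM.eigenvectorBasis i) with hu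
      have heig : M.mulVec u = hM.eigenvalues i • u := hM.mulVec_eigenvectorBasis i
      have huu : u ⬝ᵥ u = 1 := by
        have h1 : (inner ℝ (hM.eigenvectorBasis i) (hM.eigenvectorBasis i) : ℝ) = 1 := by
          simpa using orthonormal_iff_ite.mp hM.eigenvectorBasis.orthonormal i i
        rw [← h1, PiLp.inner_apply]
        simp [hu, dotProduct, RCLike.inner_apply, conj_trivial, sq]
      have hupos : (B.mulVec u) ⬝ᵥ (B.mulVec u) = hM.eigenvalues i := by
        have : u ⬝ᵥ M.mulVec u = hM.eigenvalues i := by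
          rw [heig, dotProduct_smul, smul_eq_mul, huu, mul_one]
        rw [← this, hMdef]
        conv_rhs => rw [← mulVec_mulVec, dotProduct_mulVec, vecMul_transpose]
      have hlz : hM.eigenvalues i ≠ 0 := by
        intro h0
        have hBu : B.mulVec u = 0 := by
          apply dotProduct_self_eq_zero.mp; rw [hupos, h0]
        have := hperp u hBu
        rw [hc] at hci
        apply hci
        have : u ⬝ᵥ v = 0 := by rwa [dotProduct_comm] at this
        rw [show Uᵀ.mulVec v i = u ⬝ᵥ v by
          simp [mulVec, dotProduct, hu, transpose_apply, hU], this]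
      have hlpos : 0 < hM.eigenvalues i := by
        have hnn : (0:ℝ) ≤ (B.mulVec u) ⬝ᵥ (B.mulVec u) := by
          rw [dotProduct]
          exact Finset.sum_nonneg fun j _ => mul_self_nonneg _
        rcases (hupos ▸ hnn : (0:ℝ) ≤ hM.eigenvalues i).lt_or_eq with h | h
        · exact h
        · exact absurd h.symm hlz
      have : lam2 ≤ hM.eigenvalues i := hlam.2 ⟨hlpos, i, rfl⟩
      exact mul_le_mul_of_nonneg_right this (sq_nonneg _)
  have hsum : lam2 * (v ⬝ᵥ v) ≤ ∑ i, hM.eigenvalues i * c i ^ 2 := by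
    rw [hnorm]
    have : lam2 * (c ⬝ᵥ c) = ∑ i, lam2 * c i ^ 2 := by
      simp [dotProduct, Finset.mul_sum, sq]
    rw [this]
    exact Finset.sum_le_sum fun i _ => hkey i
  have hlampos : 0 < lam2 := hlam.1.1
  calc lam2 = lam2 * 1 := by ring
    _ ≤ lam2 * (v ⬝ᵥ v) := by nlinarith
    _ ≤ ∑ i, hM.eigenvalues i * c i ^ 2 := hsum
    _ = v ⬝ᵥ M.mulVec v := hquad.symm
end

section
/- Let f : ℝ × [0,∞) → ℝ be such that f(·,t) is twice continuously differentiable and μ-strongly convex in x (so the second derivative H(x,t) ≥ μ > 0), and suppose |∂(∂f/∂x)/∂t (x,t)| ≤ κ for all x, t. Define x(λ, t) = argmax_x (λx − f(x,t)) and g(λ, t) = λ d(t) − f*(λ, t) where f*(λ,t) = sup_x(λx − f(x,t)) and d : [0,∞) → ℝ is differentiable with |d'(t)| ≤ δ. Then |∂(∂g/∂λ)/∂t (λ, t)| ≤ κ/μ + δ for all λ, t. -/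
/-!
The first-order condition for the maximiser reads `fx (X λ s) s = λ` for every `s`. Comparing two
times `t < s`, strong monotonicity of `fx (·, s)` and the `κ`-Lipschitz dependence of `fx` on time
give `μ |X λ s - X λ t| ≤ |fx (X λ t) s - fx (X λ t) t| ≤ κ (s - t)`, so `X λ` is `κ / μ`-Lipschitz
and its time derivative is bounded by `κ / μ`; only slopes to the right of `t` are used, since
nothing is assumed at negative times. Adding `|d'| ≤ δ` gives the claim.
-/

open Set Filter Topology

theorem HasDerivAt.eq_of_forall_mul_sub_le {f : ℝ → ℝ} {f' lam x₀ : ℝ}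
    (hf : HasDerivAt f f' x₀) (hmax : ∀ x, lam * x - f x ≤ lam * x₀ - f x₀) : f' = lam := by
  have hmax' : IsLocalMax (fun x => lam * x - f x) x₀ := Eventually.of_forall hmax
  have h := hmax'.hasDerivAt_eq_zero (((hasDerivAt_id x₀).const_mul lam).sub hf)
  linarith

theorem mul_abs_sub_le_abs_sub_of_le_deriv {φ φ' : ℝ → ℝ} {μ : ℝ}
    (hφ : ∀ x, HasDerivAt φ (φ' x) x) (hμ : ∀ x, μ ≤ φ' x) (a b : ℝ) :
    μ * |b - a| ≤ |φ b - φ a| := by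
  have hdiff : Differentiable ℝ φ := fun x => (hφ x).differentiableAt
  have hderiv : ∀ x, μ ≤ deriv φ x := fun x => (hφ x).deriv ▸ hμ x
  rcases le_total a b with hab | hba
  · rw [abs_of_nonneg (sub_nonneg.2 hab)]
    exact (mul_sub_le_image_sub_of_le_deriv hdiff hderiv hab).trans (le_abs_self _)
  · rw [abs_sub_comm, abs_sub_comm (φ b), abs_of_nonneg (sub_nonneg.2 hba)]
    exact (mul_sub_le_image_sub_of_le_deriv hdiff hderiv hba).trans (le_abs_self _)

theorem HasDerivWithinAt.norm_le_of_forall_gt {F : Type*} [NormedAddCommGroup F]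
    [NormedSpace ℝ F] {f : ℝ → F} {f' : F} {t K : ℝ} (hf : HasDerivWithinAt f f' (Ioi t) t)
    (hK : ∀ s > t, ‖f s - f t‖ ≤ K * (s - t)) : ‖f'‖ ≤ K := by
  have hslope := (hasDerivWithinAt_iff_tendsto_slope' self_notMem_Ioi).1 hf
  refine le_of_tendsto hslope.norm ?_
  filter_upwards [self_mem_nhdsWithin] with s (hs : t < s)
  rw [slope_def_module, norm_smul, norm_inv, Real.norm_of_nonneg (sub_nonneg.2 hs.le),
    inv_mul_le_iff₀ (sub_pos.2 hs), mul_comm]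
  exact hK s hs

theorem dual_gradient_time_derivative_bound_general
    (f fx fxx fxt : ℝ → ℝ → ℝ)   -- f(x,t), ∂f/∂x, ∂²f/∂x², ∂²f/∂x∂t
    (μ κ δ : ℝ) (hμ : 0 < μ)
    (hfx : ∀ x t, 0 ≤ t → HasDerivAt (fun y => f y t) (fx x t) x)
    (hfxx : ∀ x t, 0 ≤ t → HasDerivAt (fun y => fx y t) (fxx x t) x)
    (hfxt : ∀ x t, 0 ≤ t → HasDerivAt (fun s => fx x s) (fxt x t) t)
    (hH : ∀ x t, 0 ≤ t → μ ≤ fxx x t)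
    (hκ : ∀ x t, 0 ≤ t → |fxt x t| ≤ κ)
    (d' : ℝ → ℝ)
    (hδ : ∀ t, 0 ≤ t → |d' t| ≤ δ)
    (X : ℝ → ℝ → ℝ)   -- X lam t = argmax_x (lam*x - f(x,t))
    (hX : ∀ lam t, 0 ≤ t → ∀ x, lam * x - f x t ≤ lam * X lam t - f (X lam t) t)
    (Xt : ℝ → ℝ → ℝ)
    (hXt : ∀ lam t, 0 ≤ t → HasDerivAt (fun s => X lam s) (Xt lam t) t) :
    -- ∂g/∂λ (λ,t) = d(t) - X(λ,t), so ∂(∂g/∂λ)/∂t = d'(t) - ∂X/∂t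
    ∀ lam t, 0 ≤ t → |d' t - Xt lam t| ≤ κ / μ + δ := by
  intro lam t ht
  have foc : ∀ s, 0 ≤ s → fx (X lam s) s = lam := fun s hs =>
    (hfx _ s hs).eq_of_forall_mul_sub_le (hX lam s hs)
  have lipX : ∀ s > t, ‖X lam s - X lam t‖ ≤ κ / μ * (s - t) := by
    intro s hs
    have hs₀ : 0 ≤ s := ht.trans hs.le
    have htime := norm_image_sub_le_of_norm_deriv_le_segment' (f := fun r => fx (X lam t) r)
      (fun r hr => (hfxt _ r (ht.trans hr.1)).hasDerivWithinAt)
      (fun r hr => hκ _ r (ht.trans hr.1)) s ⟨hs.le, le_rfl⟩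
    rw [Real.norm_eq_abs, div_mul_eq_mul_div, le_div_iff₀ hμ, mul_comm]
    calc μ * |X lam s - X lam t| ≤ |fx (X lam s) s - fx (X lam t) s| :=
          mul_abs_sub_le_abs_sub_of_le_deriv (hfxx · s hs₀) (hH · s hs₀) _ _
      _ = ‖fx (X lam t) s - fx (X lam t) t‖ := by
          rw [foc s hs₀, Real.norm_eq_abs, abs_sub_comm, foc t ht]
      _ ≤ κ * (s - t) := htime
  have hXt_le : |Xt lam t| ≤ κ / μ := (hXt lam t ht).hasDerivWithinAt.norm_le_of_forall_gt lipX
  calc |d' t - Xt lam t| ≤ |d' t| + |Xt lam t| := abs_sub _ _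
    _ ≤ κ / μ + δ := by linarith [hδ t ht]

theorem dual_gradient_time_derivative_bound
    (f fx fxx fxt : ℝ → ℝ → ℝ)   -- f(x,t), ∂f/∂x, ∂²f/∂x², ∂²f/∂x∂t
    (μ κ δ : ℝ) (hμ : 0 < μ)
    (hfx : ∀ x t, 0 ≤ t → HasDerivAt (fun y => f y t) (fx x t) x)
    (hfxx : ∀ x t, 0 ≤ t → HasDerivAt (fun y => fx y t) (fxx x t) x)
    (hfxt : ∀ x t, 0 ≤ t → HasDerivAt (fun s => fx x s) (fxt x t) t)
    (hH : ∀ x t, 0 ≤ t → μ ≤ fxx x t)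
    (hκ : ∀ x t, 0 ≤ t → |fxt x t| ≤ κ)
    (d d' : ℝ → ℝ)
    (hd : ∀ t, 0 ≤ t → HasDerivAt d (d' t) t)
    (hδ : ∀ t, 0 ≤ t → |d' t| ≤ δ)
    (X : ℝ → ℝ → ℝ)   -- X lam t = argmax_x (lam*x - f(x,t))
    (hX : ∀ lam t, 0 ≤ t → ∀ x, lam * x - f x t ≤ lam * X lam t - f (X lam t) t)
    (Xt : ℝ → ℝ → ℝ)
    (hXt : ∀ lam t, 0 ≤ t → HasDerivAt (fun s => X lam s) (Xt lam t) t) :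
    -- ∂g/∂λ (λ,t) = d(t) - X(λ,t), so ∂(∂g/∂λ)/∂t = d'(t) - ∂X/∂t
    ∀ lam t, 0 ≤ t → |d' t - Xt lam t| ≤ κ / μ + δ :=
  dual_gradient_time_derivative_bound_general f fx fxx fxt μ κ δ hμ hfx hfxx hfxt hH hκ d' hδ X hX
    Xt hXt
end
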